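/- Let F be a finite field of characteristic p, let C be a linear code of length n over F with a permutation automorphism σ, and suppose every cycle of σ has length divisible by p. Then the fixed subcode F_σ(C) is self-orthogonal with respect to the Euclidean inner product. -/

import Mathlib

open Finset

/-- The action of a permutation `σ` on vectors by permuting coordinates: `(vσ) i = v (σ i)`. -/
def permAct {F : Type*} {n : ℕ} (σ : Equiv.Perm (Fin n)) (v : Fin n → F) : Fin n → F :=
  fun i => v (σ i)

open Classical in
/-- The cycle (orbit) of `σ` containing the coordinate `i`, as a `Finset`
(fixed points are counted as cycles of length 1). -/
noncomputable def orbitOf {n : ℕ} (σ : Equiv.Perm (Fin n)) (i : Fin n) : Finset (Fin n) :=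
  Finset.univ.filter (fun j => σ.SameCycle i j)

/-- The Euclidean inner product `u·v = ∑ i, u i * v i`. -/
def eInner {F : Type*} [Field F] {ι : Type*} [Fintype ι] (u v : ι → F) : F :=
  ∑ i, u i * v i

/-- The Euclidean dual of a set of vectors. -/
def dualSet {F : Type*} [Field F] {ι : Type*} [Fintype ι] (S : Set (ι → F)) : Set (ι → F) :=
  {u | ∀ v ∈ S, eInner u v = 0}

/-- A set of vectors is self-orthogonal if it is contained in its dual. -/
def IsSelfOrthogonalSet {F : Type*} [Field F] {ι : Type*} [Fintype ι] (S : Set (ι → F)) : Prop :=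
  S ⊆ dualSet S

/-- A set of vectors is self-dual if it equals its dual. -/
def IsSelfDualSet {F : Type*} [Field F] {ι : Type*} [Fintype ι] (S : Set (ι → F)) : Prop :=
  S = dualSet S

/-- A set of vectors is LCD (linear complementary dual) if it meets its dual only in `0`. -/
def IsLCDSet {F : Type*} [Field F] {ι : Type*} [Fintype ι] (S : Set (ι → F)) : Prop :=
  S ∩ dualSet S = {0}

/-- The fixed subcode `F_σ(C) = {v ∈ C : vσ = v}`. -/
def fixedCode {F : Type*} [Field F] {n : ℕ} (σ : Equiv.Perm (Fin n))
    (C : Submodule F (Fin n → F)) : Set (Fin n → F) :=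
  {v | v ∈ C ∧ permAct σ v = v}

/-- The subcode `E_σ(C) = {v ∈ C : the sum of the coordinates of v over each cycle of σ is 0}`. -/
def evenCode {F : Type*} [Field F] {n : ℕ} (σ : Equiv.Perm (Fin n))
    (C : Submodule F (Fin n → F)) : Set (Fin n → F) :=
  {v | v ∈ C ∧ ∀ i : Fin n, ∑ j ∈ orbitOf σ i, v j = 0}

/-! The coordinatewise product of two `σ`-fixed vectors is again `σ`-fixed, hence constant on every
cycle of `σ`. Splitting its coordinate sum over the cycles, each cycle contributes its length times
a constant, which vanishes because the length is divisible by the characteristic. -/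

section

variable {n : ℕ} {σ : Equiv.Perm (Fin n)}

theorem permAct_mul {R : Type*} [Mul R] (u v : Fin n → R) :
    permAct σ (u * v) = permAct σ u * permAct σ v :=
  rfl

theorem mem_orbitOf {i j : Fin n} : j ∈ orbitOf σ i ↔ σ.SameCycle i j := by
  simp [orbitOf]

theorem orbitOf_eq_orbitOf_iff {i j : Fin n} : orbitOf σ j = orbitOf σ i ↔ σ.SameCycle i j := by
  refine ⟨fun h => ?_, fun h => Finset.ext fun k => ?_⟩
  · have : i ∈ orbitOf σ j := h ▸ mem_orbitOf.mpr (Equiv.Perm.SameCycle.refl σ i)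
    exact (mem_orbitOf.mp this).symm
  · simp only [mem_orbitOf]
    exact ⟨h.trans, h.symm.trans⟩

theorem apply_eq_of_sameCycle {M : Type*} {f : Fin n → M} (hf : permAct σ f = f) {i j : Fin n}
    (h : σ.SameCycle i j) : f j = f i := by
  obtain ⟨k, -, rfl⟩ := h.exists_pow_eq'
  clear h
  induction k with
  | zero => rfl
  | succ k ih => rw [pow_succ', Equiv.Perm.mul_apply, ← ih]; exact congrFun hf _

theorem sum_orbitOf_of_permAct_eq {M : Type*} [AddCommMonoid M] {f : Fin n → M}
    (hf : permAct σ f = f) (i : Fin n) : ∑ j ∈ orbitOf σ i, f j = (orbitOf σ i).card • f i := by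
  rw [Finset.sum_congr rfl fun j hj => apply_eq_of_sameCycle hf (mem_orbitOf.mp hj),
    Finset.sum_const]

theorem sum_eq_sum_sum_orbitOf {M : Type*} [AddCommMonoid M] (f : Fin n → M) :
    ∑ i, f i = ∑ c ∈ univ.image (orbitOf σ), ∑ j ∈ c, f j := by
  classical
  refine (Finset.sum_image' (f := fun c => ∑ j ∈ c, f j) f fun i _ => ?_).symm
  congr 1
  ext j
  simp [orbitOf_eq_orbitOf_iff, mem_orbitOf]

theorem sum_eq_zero_of_permAct_eq {R : Type*} [Semiring R] (p : ℕ) [CharP R p]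
    (hcyc : ∀ i : Fin n, p ∣ (orbitOf σ i).card) {f : Fin n → R} (hf : permAct σ f = f) :
    ∑ i, f i = 0 := by
  rw [sum_eq_sum_sum_orbitOf]
  refine Finset.sum_eq_zero fun c hc => ?_
  obtain ⟨i, -, rfl⟩ := Finset.mem_image.mp hc
  rw [sum_orbitOf_of_permAct_eq hf, nsmul_eq_mul, (CharP.cast_eq_zero_iff R p _).mpr (hcyc i),
    zero_mul]

end

theorem fixed_code_self_orthogonal_general {F : Type*} [Field F] (p : ℕ) [CharP F p]
    {n : ℕ} (σ : Equiv.Perm (Fin n)) (C : Submodule F (Fin n → F))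
    (hcyc : ∀ i : Fin n, p ∣ (orbitOf σ i).card) :
    IsSelfOrthogonalSet (fixedCode σ C) := by
  rintro u ⟨-, hu⟩ v ⟨-, hv⟩
  show ∑ i, (u * v) i = 0
  exact sum_eq_zero_of_permAct_eq p hcyc (by rw [permAct_mul, hu, hv])

/-- Let `C` be a linear code over a finite field of characteristic `p`
with a permutation automorphism `σ` all of whose cycles have length divisible by `p`.
Then `F_σ(C)` is self-orthogonal with respect to the Euclidean inner product. -/
theorem fixed_code_self_orthogonal {F : Type*} [Field F] [Fintype F] (p : ℕ) [CharP F p]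
    {n : ℕ} (σ : Equiv.Perm (Fin n)) (C : Submodule F (Fin n → F))
    (hC : ∀ v, v ∈ C ↔ permAct σ v ∈ C)
    (hcyc : ∀ i : Fin n, p ∣ (orbitOf σ i).card) :
    IsSelfOrthogonalSet (fixedCode σ C) :=
  fixed_code_self_orthogonal_general p σ C hcyc
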